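/- For $N_c = 2$ colours and $N_f = 1$ flavour, the Molien integral $\frac{1}{2}\cdot\frac{1}{2\pi i}\oint_{|z|=1} dz\, \frac{(1-z^2)(1-z^{-2})}{z\,(1-t_1 z)(1-t_2 z)(1-t_1 z^{-1})(1-t_2 z^{-1})}$ equals $\frac{1}{1-t_1 t_2}$, for complex parameters with $0 < |t_1|, |t_2| < 1$. -/

import Mathlib

/-!
Clearing the inverse powers, the integrand is
`-(1 - z²)² / (z (z - t₁) (z - t₂) (1 - t₁ z) (1 - t₂ z))`, whose poles in the unit disc are
`0, t₁, t₂`. Partial fractions split it into `-(t₁t₂)⁻¹ z⁻¹`, a term `(B z + C) / ((z - t₁)(z - t₂))`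
with `B = (1 + t₁t₂) / (t₁t₂ (1 - t₁t₂))`, and a remainder holomorphic on the closed disc. The
residues inside add up to `-(t₁t₂)⁻¹ + B = 2 / (1 - t₁t₂)`, and the remainder integrates to zero
by Cauchy's theorem.
-/

open Complex Metric Set
open scoped Real

theorem sub_ne_zero_of_mem_sphere_of_mem_ball {E : Type*} [SeminormedAddGroup E]
    {c z w : E} {R : ℝ} (hz : z ∈ sphere c R) (hw : w ∈ ball c R) : z - w ≠ 0 :=
  sub_ne_zero.2 (sphere_disjoint_ball.ne_of_mem hz hw)

theorem notMem_sphere_abs_of_mem_ball {E : Type*} [PseudoMetricSpace E] {c w : E} {R : ℝ}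
    (hw : w ∈ ball c R) : w ∉ sphere c |R| := by
  rw [abs_of_pos (dist_nonneg.trans_lt hw)]
  exact sphere_disjoint_ball.notMem_of_mem_right hw

theorem one_sub_mul_ne_zero_of_norm_lt_one {𝕜 : Type*} [NormedRing 𝕜] [NormOneClass 𝕜]
    {t z : 𝕜} (ht : ‖t‖ < 1) (hz : ‖z‖ ≤ 1) : 1 - t * z ≠ 0 := by
  refine sub_ne_zero.2 fun h => ?_
  have : ‖t * z‖ < 1 :=
    (norm_mul_le t z).trans_lt (mul_lt_one_of_nonneg_of_lt_one_left (norm_nonneg t) ht hz)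
  simp [← h] at this

theorem circleIntegrable_sub_inv_of_mem_ball {c w : ℂ} {R : ℝ} (hw : w ∈ ball c R) :
    CircleIntegrable (fun z => (z - w)⁻¹) c R :=
  circleIntegrable_sub_inv_iff.2 (.inr (notMem_sphere_abs_of_mem_ball hw))

theorem circleIntegral_affine_div_sub_mul_sub (B C : ℂ) {a b c : ℂ} {R : ℝ}
    (ha : a ∈ ball c R) (hb : b ∈ ball c R) :
    (∮ z in C(c, R), (B * z + C) / ((z - a) * (z - b))) = 2 * π * I * B := by
  have hR : 0 ≤ R := dist_nonneg.trans ha.le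
  rcases eq_or_ne a b with rfl | hab
  · have hsplit : EqOn (fun z => (B * z + C) / ((z - a) * (z - a)))
        (fun z => B • (z - a)⁻¹ + (C + B * a) • (z - a) ^ (-2 : ℤ)) (sphere c R) := by
      intro z hz
      have := sub_ne_zero_of_mem_sphere_of_mem_ball hz ha
      simp only [smul_eq_mul, zpow_neg, zpow_two]
      field_simp
      ring
    have hint : CircleIntegrable (fun z => (z - a) ^ (-2 : ℤ)) c R :=
      circleIntegrable_sub_zpow_iff.2 (.inr (.inr (notMem_sphere_abs_of_mem_ball ha)))
    rw [circleIntegral.integral_congr hR hsplit,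
      circleIntegral.integral_add (circleIntegrable_sub_inv_of_mem_ball ha).const_fun_smul
        hint.const_fun_smul,
      circleIntegral.integral_smul, circleIntegral.integral_smul,
      circleIntegral.integral_sub_inv_of_mem_ball ha,
      circleIntegral.integral_sub_zpow_of_ne (by decide)]
    ring
  · have hab' := sub_ne_zero.2 hab
    have hba' := sub_ne_zero.2 hab.symm
    have hsplit : EqOn (fun z => (B * z + C) / ((z - a) * (z - b)))
        (fun z => ((B * a + C) / (a - b)) • (z - a)⁻¹ + ((B * b + C) / (b - a)) • (z - b)⁻¹)
        (sphere c R) := by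
      intro z hz
      have := sub_ne_zero_of_mem_sphere_of_mem_ball hz ha
      have := sub_ne_zero_of_mem_sphere_of_mem_ball hz hb
      simp only [smul_eq_mul]
      field_simp
      ring
    rw [circleIntegral.integral_congr hR hsplit,
      circleIntegral.integral_add (circleIntegrable_sub_inv_of_mem_ball ha).const_fun_smul
        (circleIntegrable_sub_inv_of_mem_ball hb).const_fun_smul,
      circleIntegral.integral_smul, circleIntegral.integral_smul,
      circleIntegral.integral_sub_inv_of_mem_ball ha, circleIntegral.integral_sub_inv_of_mem_ball hb]
    simp only [smul_eq_mul]
    field_simp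
    ring

theorem molien_integrand_eq_partial_fractions {t₁ t₂ z : ℂ} (ht₁ : t₁ ≠ 0) (ht₂ : t₂ ≠ 0)
    (hs : 1 - t₁ * t₂ ≠ 0) (hz : z ≠ 0) (hz₁ : z - t₁ ≠ 0) (hz₂ : z - t₂ ≠ 0)
    (hq₁ : 1 - t₁ * z ≠ 0) (hq₂ : 1 - t₂ * z ≠ 0) :
    (1 - z ^ 2) * (1 - z⁻¹ ^ 2) /
        (z * (1 - t₁ * z) * (1 - t₂ * z) * (1 - t₁ * z⁻¹) * (1 - t₂ * z⁻¹))
      = -(t₁ * t₂)⁻¹ * z⁻¹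
        + ((1 + t₁ * t₂) / (t₁ * t₂ * (1 - t₁ * t₂)) * z
            + -(t₁ + t₂) / (t₁ * t₂ * (1 - t₁ * t₂))) / ((z - t₁) * (z - t₂))
        - ((1 + t₁ * t₂) * z - (t₁ + t₂)) / ((1 - t₁ * t₂) * (1 - t₁ * z) * (1 - t₂ * z)) := by
  rw [mul_comm] at hq₁ hq₂
  have h₁ : 1 - t₁ * z⁻¹ = (z - t₁) / z := by field_simp
  have h₂ : 1 - t₂ * z⁻¹ = (z - t₂) / z := by field_simp
  rw [h₁, h₂]
  field_simp
  ring

theorem circleIntegral_molien_integrand {t₁ t₂ : ℂ} (ht₁ : t₁ ≠ 0) (ht₂ : t₂ ≠ 0)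
    (ht₁' : ‖t₁‖ < 1) (ht₂' : ‖t₂‖ < 1) :
    (∮ z in C(0, 1), (1 - z ^ 2) * (1 - z⁻¹ ^ 2) /
        (z * (1 - t₁ * z) * (1 - t₂ * z) * (1 - t₁ * z⁻¹) * (1 - t₂ * z⁻¹)))
      = 2 * π * I * (2 / (1 - t₁ * t₂)) := by
  have hs : 1 - t₁ * t₂ ≠ 0 := one_sub_mul_ne_zero_of_norm_lt_one ht₁' ht₂'.le
  have hb₁ : t₁ ∈ ball (0 : ℂ) 1 := mem_ball_zero_iff.2 ht₁'
  have hb₂ : t₂ ∈ ball (0 : ℂ) 1 := mem_ball_zero_iff.2 ht₂'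
  have hq {t : ℂ} (ht : ‖t‖ < 1) (z : ℂ) (hz : z ∈ closedBall (0 : ℂ) 1) : 1 - t * z ≠ 0 :=
    one_sub_mul_ne_zero_of_norm_lt_one ht (mem_closedBall_zero_iff.1 hz)
  have hQ : ∀ z ∈ closedBall (0 : ℂ) 1, (1 - t₁ * t₂) * (1 - t₁ * z) * (1 - t₂ * z) ≠ 0 :=
    fun z hz => mul_ne_zero (mul_ne_zero hs (hq ht₁' z hz)) (hq ht₂' z hz)
  have hP : ∀ z ∈ sphere (0 : ℂ) 1, (z - t₁) * (z - t₂) ≠ 0 := fun z hz =>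
    mul_ne_zero (sub_ne_zero_of_mem_sphere_of_mem_ball hz hb₁)
      (sub_ne_zero_of_mem_sphere_of_mem_ball hz hb₂)
  have h0 : ∀ z ∈ sphere (0 : ℂ) 1, z ≠ 0 := fun z hz => ne_zero_of_mem_unit_sphere ⟨z, hz⟩
  have hsplit : EqOn _ _ (sphere (0 : ℂ) 1) := fun z hz =>
    molien_integrand_eq_partial_fractions ht₁ ht₂ hs (h0 z hz)
      (sub_ne_zero_of_mem_sphere_of_mem_ball hz hb₁) (sub_ne_zero_of_mem_sphere_of_mem_ball hz hb₂)
      (hq ht₁' z (sphere_subset_closedBall hz)) (hq ht₂' z (sphere_subset_closedBall hz))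
  have hhol : DifferentiableOn ℂ
      (fun z => ((1 + t₁ * t₂) * z - (t₁ + t₂)) / ((1 - t₁ * t₂) * (1 - t₁ * z) * (1 - t₂ * z)))
      (closedBall 0 1) := by
    fun_prop (disch := assumption)
  have hinv : (∮ z in C(0, 1), z⁻¹) = 2 * π * I := by
    simpa using circleIntegral.integral_sub_center_inv (0 : ℂ) one_ne_zero
  rw [circleIntegral.integral_congr zero_le_one hsplit,
    circleIntegral.integral_sub ?_
      ((hhol.continuousOn.mono sphere_subset_closedBall).circleIntegrable zero_le_one),
    circleIntegral.integral_add ?_ ?_, circleIntegral.integral_const_mul, hinv,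
    circleIntegral_affine_div_sub_mul_sub _ _ hb₁ hb₂,
    (hhol.diffContOnCl_ball subset_rfl).circleIntegral_eq_zero zero_le_one]
  · field_simp
    ring
  all_goals exact ContinuousOn.circleIntegrable zero_le_one (by fun_prop (disch := assumption))

/-- The Molien integral for `SU(2)` SQCD with one flavour equals `1/(1 - t₁t₂)`. -/
theorem molien_su2_one_flavour (t₁ t₂ : ℂ)
    (h₁ : 0 < ‖t₁‖) (h₁' : ‖t₁‖ < 1) (h₂ : 0 < ‖t₂‖) (h₂' : ‖t₂‖ < 1) :
    (1 / 2) * (1 / (2 * Real.pi * I)) *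
      (∮ z in C(0, 1), (1 - z ^ 2) * (1 - z⁻¹ ^ 2) /
        (z * (1 - t₁ * z) * (1 - t₂ * z) * (1 - t₁ * z⁻¹) * (1 - t₂ * z⁻¹)))
    = 1 / (1 - t₁ * t₂) := by
  have hs : 1 - t₁ * t₂ ≠ 0 := one_sub_mul_ne_zero_of_norm_lt_one h₁' h₂'.le
  rw [circleIntegral_molien_integrand (norm_pos_iff.1 h₁) (norm_pos_iff.1 h₂) h₁' h₂']
  field_simp
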